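/- Let $n \geq 1$, $\lambda_1 > 2$, and $0 < \alpha \leq n(\lambda_1-2)/2$. Let $I_1, I_2$ be cubes in $\mathbb{R}^n$ (with the $\ell^\infty$ metric) and suppose $(x_1,t_1) \in W_{I_2} := I_2 \times (\ell(I_2)/2, \ell(I_2))$. Then $\bigg[ \int_{\mathbb{R}^n} \bigg(\int_{I_1} \frac{dz_1}{(t_1 + |x_1 - y_1 - z_1|)^{n+\alpha}} \bigg)^2 \Big(\frac{t_1}{t_1 + |y_1|}\Big)^{n \lambda_1} \frac{dy_1}{t_1^n} \bigg]^{1/2} \lesssim \frac{|I_1|}{(\ell(I_2) + d(I_1,I_2))^{n + \alpha}}$, with implied constant depending only on $n$, $\alpha$, $\lambda_1$. -/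

import Mathlib

open MeasureTheory Set
open scoped ENNReal

noncomputable section

structure Cube (n : ℕ) where
  corner : Fin n → ℝ
  side : ℝ
  side_pos : 0 < side

namespace Cube

variable {n : ℕ}

/-- the cube as a subset of `ℝⁿ` (with the sup metric) -/
def toSet (I : Cube n) : Set (Fin n → ℝ) :=
  {x | ∀ i, I.corner i ≤ x i ∧ x i < I.corner i + I.side}

/-- Lebesgue measure of the cube -/
def vol (I : Cube n) : ℝ := I.side ^ n

def center (I : Cube n) : Fin n → ℝ := fun i => I.corner i + I.side / 2

/-- dyadic child of a cube, indexed by `ε : Fin n → Bool` -/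
def child (I : Cube n) (ε : Fin n → Bool) : Cube n :=
  ⟨fun i => I.corner i + (if ε i then I.side / 2 else 0), I.side / 2, by
    have := I.side_pos; linarith⟩

/-- the concentric cube of twice the side length -/
def double (I : Cube n) : Cube n :=
  ⟨fun i => I.corner i - I.side / 2, 2 * I.side, by have := I.side_pos; linarith⟩

end Cube

/-- distance between two sets in a metric space -/
def setDist' {X : Type*} [MetricSpace X] (A B : Set X) : ℝ :=
  sInf (Set.image2 dist A B)

/-- distance between two cubes (in the sup metric) -/
def cubeDist {n : ℕ} (I J : Cube n) : ℝ := setDist' I.toSet J.toSet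

/-- the long distance `D(I,J) = ℓ(I) + ℓ(J) + d(I,J)` -/
def longDist {n : ℕ} (I J : Cube n) : ℝ := I.side + J.side + cubeDist I J

/-- the dyadic cube of generation `p.1` and position `p.2` in the standard dyadic grid -/
def dyadicCube (n : ℕ) (p : ℤ × (Fin n → ℤ)) : Cube n :=
  ⟨fun i => (p.2 i : ℝ) * (2 : ℝ) ^ (-p.1), (2 : ℝ) ^ (-p.1), by positivity⟩

/-- index of the `k`-generation dyadic ancestor -/
def ancestor (n : ℕ) (k : ℕ) (p : ℤ × (Fin n → ℤ)) : ℤ × (Fin n → ℤ) :=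
  (p.1 - k, fun i => Int.fdiv (p.2 i) (2 ^ k))

/-- goodness of a dyadic cube with parameters `r`, `γ` : for every dyadic cube at least
`2^r` times bigger, the distance to its boundary exceeds `ℓ(I)^γ ℓ(J)^(1-γ)` -/
def isGood (n : ℕ) (r : ℕ) (γ : ℝ) (p : ℤ × (Fin n → ℤ)) : Prop :=
  ∀ q : ℤ × (Fin n → ℤ), 2 ^ r * (dyadicCube n p).side ≤ (dyadicCube n q).side →
    (dyadicCube n p).side ^ γ * (dyadicCube n q).side ^ (1 - γ)
      < setDist' (dyadicCube n p).toSet (frontier (dyadicCube n q).toSet)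

/-!
Cauchy–Schwarz on `I₁` and Tonelli reduce the estimate to a bound, uniform in `z ∈ I₁`, for the
convolution of `(t + |x - z - y|)^{-2(n+α)}` with the weight `(t / (t + |y|))^{nλ₁} t^{-n} dy`.
At each `y` one of `t + |x - z - y|`, `t + |y|` is at least `(t + |x - z|) / 2`; since
`2(n+α) ≤ nλ₁` this splits the integrand into two scaled copies of `(1 + |v|)^{-q}` with `q > n`,
so the convolution is `≲ (t + |x - z|)^{-2(n+α)}`. Finally `t + |x - z| ≥ (ℓ(I₂) + d(I₁,I₂)) / 2`
on the Whitney region.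
-/

open Module

lemma rpow_neg_le_two_rpow_mul_rpow_neg {a c A : ℝ} (hc : 0 < c) (hA : 0 ≤ A)
    (hca : c ≤ 2 * a) : a ^ (-A) ≤ 2 ^ A * c ^ (-A) :=
  calc a ^ (-A) ≤ (c / 2) ^ (-A) :=
        Real.rpow_le_rpow_of_nonpos (by positivity) (by linarith) (by linarith)
    _ = 2 ^ A * c ^ (-A) := by
        rw [Real.div_rpow hc.le zero_le_two, Real.rpow_neg zero_le_two, div_inv_eq_mul, mul_comm]

lemma div_rpow_eq_rpow_mul_rpow_neg {t b : ℝ} (ht : 0 ≤ t) (hb : 0 ≤ b) (q : ℝ) :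
    (t / b) ^ q = t ^ q * b ^ (-q) := by
  rw [Real.div_rpow ht hb, Real.rpow_neg hb, div_eq_mul_inv]

lemma add_norm_sub_rpow_neg_mul_le {X : Type*} [SeminormedAddCommGroup X] {t A B : ℝ}
    (ht : 0 < t) (hA : 0 ≤ A) (hAB : A ≤ B) (u y : X) :
    (t + ‖u - y‖) ^ (-A) * (t / (t + ‖y‖)) ^ B
      ≤ 2 ^ A * (t + ‖u‖) ^ (-A) * ((t / (t + ‖u - y‖)) ^ A + (t / (t + ‖y‖)) ^ B) := by
  have hc : 0 < t + ‖u‖ := by positivity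
  have htri : t + ‖u‖ ≤ (t + ‖u - y‖) + (t + ‖y‖) := by
    linarith [norm_le_norm_sub_add u y]
  have hweight : 0 ≤ (t / (t + ‖y‖)) ^ B := by positivity
  rcases le_total (t + ‖u‖) (2 * (t + ‖y‖)) with hy | hy
  · have hBA : (t / (t + ‖y‖)) ^ B ≤ (t / (t + ‖y‖)) ^ A :=
      Real.rpow_le_rpow_of_exponent_ge (by positivity)
        ((div_le_one (by positivity)).mpr (by linarith [norm_nonneg y])) hAB
    have hAu : (t / (t + ‖y‖)) ^ A ≤ t ^ A * (2 ^ A * (t + ‖u‖) ^ (-A)) := by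
      rw [div_rpow_eq_rpow_mul_rpow_neg ht.le (by positivity)]
      exact mul_le_mul_of_nonneg_left (rpow_neg_le_two_rpow_mul_rpow_neg hc hA hy)
        (by positivity)
    calc (t + ‖u - y‖) ^ (-A) * (t / (t + ‖y‖)) ^ B
        ≤ (t + ‖u - y‖) ^ (-A) * (t ^ A * (2 ^ A * (t + ‖u‖) ^ (-A))) := by
          gcongr; exact hBA.trans hAu
      _ = 2 ^ A * (t + ‖u‖) ^ (-A) * (t / (t + ‖u - y‖)) ^ A := by
          rw [div_rpow_eq_rpow_mul_rpow_neg ht.le (by positivity)]; ring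
      _ ≤ _ := by gcongr; exact le_add_of_nonneg_right hweight
  · have hAu : (t + ‖u - y‖) ^ (-A) ≤ 2 ^ A * (t + ‖u‖) ^ (-A) :=
      rpow_neg_le_two_rpow_mul_rpow_neg hc hA (by linarith)
    calc (t + ‖u - y‖) ^ (-A) * (t / (t + ‖y‖)) ^ B
        ≤ 2 ^ A * (t + ‖u‖) ^ (-A) * (t / (t + ‖y‖)) ^ B := by gcongr
      _ ≤ _ := by gcongr; exact le_add_of_nonneg_left (by positivity)

lemma div_add_norm_rpow_eq_one_add_norm_smul_rpow_neg {X : Type*} [SeminormedAddCommGroup X]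
    [NormedSpace ℝ X] {t : ℝ} (ht : 0 < t) (y : X) (q : ℝ) :
    (t / (t + ‖y‖)) ^ q = (1 + ‖t⁻¹ • y‖) ^ (-q) := by
  have h : t / (t + ‖y‖) = (1 + ‖t⁻¹ • y‖)⁻¹ := by
    rw [norm_smul, norm_inv, Real.norm_of_nonneg ht.le]
    field_simp
  rw [h, Real.inv_rpow (by positivity), Real.rpow_neg (by positivity)]

lemma sq_lintegral_le_measure_univ_mul_lintegral_sq {α : Type*} [MeasurableSpace α]
    {μ : Measure α} {f : α → ℝ≥0∞} (hf : AEMeasurable f μ) :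
    (∫⁻ a, f a ∂μ) ^ 2 ≤ μ univ * ∫⁻ a, f a ^ 2 ∂μ := by
  have holder := ENNReal.lintegral_mul_norm_pow_le (hf.pow_const 2) (aemeasurable_const (b := 1))
    (p := (2 : ℕ)⁻¹) (q := (2 : ℕ)⁻¹) (by positivity) (by positivity) (by norm_num)
  simp only [ENNReal.pow_rpow_inv_natCast two_ne_zero, ENNReal.one_rpow, mul_one,
    lintegral_const, one_mul] at holder
  calc (∫⁻ a, f a ∂μ) ^ 2
      ≤ ((∫⁻ a, f a ^ 2 ∂μ) ^ ((2 : ℕ)⁻¹ : ℝ) * μ univ ^ ((2 : ℕ)⁻¹ : ℝ)) ^ 2 := by gcongr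
    _ = μ univ * ∫⁻ a, f a ^ 2 ∂μ := by
        rw [mul_pow, ENNReal.rpow_inv_natCast_pow two_ne_zero,
          ENNReal.rpow_inv_natCast_pow two_ne_zero, mul_comm]

def bracketConvolutionConst {E : Type*} [NormedAddCommGroup E] [MeasurableSpace E]
    (μ : Measure E) (A B : ℝ) : ℝ :=
  2 ^ A * ((∫ y, (1 + ‖y‖) ^ (-A) ∂μ) + ∫ y, (1 + ‖y‖) ^ (-B) ∂μ)

section HaarMeasure

variable {E : Type*} [NormedAddCommGroup E] [NormedSpace ℝ E] [FiniteDimensional ℝ E]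
  [MeasurableSpace E] [BorelSpace E] (μ : Measure E) [μ.IsAddHaarMeasure]

lemma integral_one_add_norm_rpow_neg_pos {q : ℝ} (hq : (finrank ℝ E : ℝ) < q) :
    0 < ∫ y, (1 + ‖y‖) ^ (-q) ∂μ := by
  rw [integral_pos_iff_support_of_nonneg (fun y => by positivity) (integrable_one_add_norm hq),
    Function.support_eq_univ fun y => (Real.rpow_pos_of_pos (by positivity) _).ne']
  exact Measure.measure_univ_pos.mpr (NeZero.ne μ)

lemma bracketConvolutionConst_pos {A B : ℝ} (hA : (finrank ℝ E : ℝ) < A) (hAB : A ≤ B) :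
    0 < bracketConvolutionConst μ A B := by
  have := integral_one_add_norm_rpow_neg_pos μ hA
  have := integral_one_add_norm_rpow_neg_pos μ (hA.trans_le hAB)
  unfold bracketConvolutionConst
  positivity

lemma integrable_div_add_norm_rpow {t q : ℝ} (ht : 0 < t) (hq : (finrank ℝ E : ℝ) < q) :
    Integrable (fun y : E => (t / (t + ‖y‖)) ^ q) μ := by
  simp_rw [div_add_norm_rpow_eq_one_add_norm_smul_rpow_neg ht]
  exact (integrable_one_add_norm hq).comp_smul (inv_ne_zero ht.ne')

lemma integral_div_add_norm_rpow {t : ℝ} (ht : 0 < t) (q : ℝ) :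
    ∫ y, (t / (t + ‖y‖)) ^ q ∂μ = t ^ finrank ℝ E * ∫ y, (1 + ‖y‖) ^ (-q) ∂μ := by
  simp_rw [div_add_norm_rpow_eq_one_add_norm_smul_rpow_neg ht]
  rw [Measure.integral_comp_inv_smul_of_nonneg μ (fun y : E => (1 + ‖y‖) ^ (-q)) ht.le,
    smul_eq_mul]

lemma lintegral_add_norm_sub_rpow_neg_mul_le {t A B : ℝ} (ht : 0 < t)
    (hA : (finrank ℝ E : ℝ) < A) (hAB : A ≤ B) (u : E) :
    ∫⁻ y, ENNReal.ofReal ((t + ‖u - y‖) ^ (-A) * (t / (t + ‖y‖)) ^ B / t ^ finrank ℝ E) ∂μ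
      ≤ ENNReal.ofReal (bracketConvolutionConst μ A B * (t + ‖u‖) ^ (-A)) := by
  have hA0 : 0 ≤ A := (Nat.cast_nonneg _).trans hA.le
  set g : E → ℝ := fun y =>
    2 ^ A * (t + ‖u‖) ^ (-A) * ((t / (t + ‖u - y‖)) ^ A + (t / (t + ‖y‖)) ^ B) / t ^ finrank ℝ E
  have hgA := (integrable_div_add_norm_rpow μ ht hA).comp_sub_left u
  have hgB := integrable_div_add_norm_rpow μ ht (hA.trans_le hAB)
  have hg : Integrable g μ := ((hgA.add hgB).const_mul _).div_const _
  have hg_eq : ∫ y, g y ∂μ = bracketConvolutionConst μ A B * (t + ‖u‖) ^ (-A) := by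
    have hshift := integral_sub_left_eq_self (fun y : E => (t / (t + ‖y‖)) ^ A) μ u
    simp only [g, bracketConvolutionConst]
    rw [integral_div, integral_const_mul, integral_add hgA hgB, hshift,
      integral_div_add_norm_rpow μ ht, integral_div_add_norm_rpow μ ht]
    field_simp
  calc _ ≤ ∫⁻ y, ENNReal.ofReal (g y) ∂μ :=
        lintegral_mono fun y => ENNReal.ofReal_le_ofReal <| div_le_div_of_nonneg_right
          (add_norm_sub_rpow_neg_mul_le ht hA0 hAB u y) (by positivity)
    _ = _ := by
        rw [← ofReal_integral_eq_lintegral_ofReal hg (ae_of_all _ fun y => by positivity), hg_eq]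

lemma lintegral_sq_setIntegral_mul_weight_le {β B t δ : ℝ} (hβ : (finrank ℝ E : ℝ) < 2 * β)
    (hβB : 2 * β ≤ B) (ht : 0 < t) (hδ : 0 < δ) {S : Set E} (hS : μ S ≠ ∞) {x : E}
    (hxS : ∀ z ∈ S, δ ≤ t + ‖x - z‖) :
    ∫⁻ y, ENNReal.ofReal ((∫ z in S, ((t + ‖x - y - z‖) ^ β)⁻¹ ∂μ) ^ 2
        * (t / (t + ‖y‖)) ^ B / t ^ finrank ℝ E) ∂μ
      ≤ μ S ^ 2 * ENNReal.ofReal (bracketConvolutionConst μ (2 * β) B * δ ^ (-(2 * β))) := by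
  have hβ0 : 0 ≤ 2 * β := (Nat.cast_nonneg _).trans hβ.le
  set K := bracketConvolutionConst μ (2 * β) B
  set G : E → E → ℝ≥0∞ := fun y z => ENNReal.ofReal
    ((t + ‖x - z - y‖) ^ (-(2 * β)) * (t / (t + ‖y‖)) ^ B / t ^ finrank ℝ E)
  have hkernel_sq : ∀ y z : E,
      ((t + ‖x - y - z‖) ^ β)⁻¹ ^ 2 = (t + ‖x - z - y‖) ^ (-(2 * β)) := fun y z => by
    rw [sub_right_comm, ← Real.rpow_neg (by positivity), ← Real.rpow_mul_natCast (by positivity)]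
    ring_nf
  have hpointwise : ∀ y, ENNReal.ofReal ((∫ z in S, ((t + ‖x - y - z‖) ^ β)⁻¹ ∂μ) ^ 2
      * (t / (t + ‖y‖)) ^ B / t ^ finrank ℝ E) ≤ μ S * ∫⁻ z in S, G y z ∂μ := fun y => by
    have hint : ENNReal.ofReal (∫ z in S, ((t + ‖x - y - z‖) ^ β)⁻¹ ∂μ)
        ≤ ∫⁻ z in S, ENNReal.ofReal ((t + ‖x - y - z‖) ^ β)⁻¹ ∂μ := by
      rw [← Real.enorm_of_nonneg (integral_nonneg fun z => by positivity)]
      refine (enorm_integral_le_lintegral_enorm _).trans_eq (lintegral_congr fun z => ?_)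
      exact Real.enorm_of_nonneg (by positivity)
    have hCS := sq_lintegral_le_measure_univ_mul_lintegral_sq (μ := μ.restrict S)
      (f := fun z => ENNReal.ofReal ((t + ‖x - y - z‖) ^ β)⁻¹) (by fun_prop)
    rw [Measure.restrict_apply_univ] at hCS
    calc _ = ENNReal.ofReal (∫ z in S, ((t + ‖x - y - z‖) ^ β)⁻¹ ∂μ) ^ 2
          * ENNReal.ofReal ((t / (t + ‖y‖)) ^ B / t ^ finrank ℝ E) := by
          rw [mul_div_assoc, ENNReal.ofReal_mul (sq_nonneg _),
            ENNReal.ofReal_pow (integral_nonneg fun z => by positivity)]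
      _ ≤ μ S * (∫⁻ z in S, ENNReal.ofReal ((t + ‖x - y - z‖) ^ β)⁻¹ ^ 2 ∂μ)
          * ENNReal.ofReal ((t / (t + ‖y‖)) ^ B / t ^ finrank ℝ E) := by
          gcongr; exact (pow_le_pow_left₀ (by positivity) hint 2).trans hCS
      _ = μ S * ∫⁻ z in S, G y z ∂μ := by
          rw [mul_assoc, ← lintegral_mul_const' _ _ ENNReal.ofReal_ne_top]
          congr 1
          refine lintegral_congr fun z => ?_
          rw [← ENNReal.ofReal_pow (by positivity), ← ENNReal.ofReal_mul (by positivity),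
            hkernel_sq, ← mul_div_assoc]
  have hslice : ∀ z ∈ S, ∫⁻ y, G y z ∂μ ≤ ENNReal.ofReal (K * δ ^ (-(2 * β))) := fun z hz =>
    (lintegral_add_norm_sub_rpow_neg_mul_le μ ht hβ hβB (x - z)).trans <|
      ENNReal.ofReal_le_ofReal <| mul_le_mul_of_nonneg_left
        (Real.rpow_le_rpow_of_nonpos hδ (hxS z hz) (by linarith))
        (bracketConvolutionConst_pos μ hβ hβB).le
  calc _ ≤ ∫⁻ y, μ S * ∫⁻ z in S, G y z ∂μ ∂μ := lintegral_mono hpointwise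
    _ = μ S * ∫⁻ z in S, ∫⁻ y, G y z ∂μ ∂μ := by
        rw [lintegral_const_mul' _ _ hS, lintegral_lintegral_swap (by fun_prop)]
    _ ≤ μ S * ∫⁻ z in S, ENNReal.ofReal (K * δ ^ (-(2 * β))) ∂μ :=
        mul_le_mul_right (setLIntegral_mono measurable_const hslice) _
    _ = μ S ^ 2 * ENNReal.ofReal (K * δ ^ (-(2 * β))) := by
        rw [setLIntegral_const]; ring

theorem exists_sqrt_integral_sq_setIntegral_mul_weight_le {β B : ℝ}
    (hβ : (finrank ℝ E : ℝ) < 2 * β) (hβB : 2 * β ≤ B) :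
    ∃ C > 0, ∀ (t δ : ℝ) (x : E) (S : Set E), 0 < t → 0 < δ → μ S ≠ ∞ →
      (∀ z ∈ S, δ ≤ t + ‖x - z‖) →
      (∫ y, (∫ z in S, ((t + ‖x - y - z‖) ^ β)⁻¹ ∂μ) ^ 2
          * (t / (t + ‖y‖)) ^ B / t ^ (finrank ℝ E : ℝ) ∂μ) ^ ((1 : ℝ) / 2)
        ≤ C * μ.real S / δ ^ β := by
  set K := bracketConvolutionConst μ (2 * β) B
  have hK : 0 < K := bracketConvolutionConst_pos μ hβ hβB
  refine ⟨√K, Real.sqrt_pos.mpr hK, fun t δ x S ht hδ hS hxS => ?_⟩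
  set F : E → ℝ := fun y => (∫ z in S, ((t + ‖x - y - z‖) ^ β)⁻¹ ∂μ) ^ 2
    * (t / (t + ‖y‖)) ^ B / t ^ (finrank ℝ E : ℝ)
  have hF_nonneg : ∀ y, 0 ≤ F y := fun y =>
    div_nonneg (mul_nonneg (sq_nonneg _) (by positivity)) (by positivity)
  have hδ_sq : δ ^ (-(2 * β)) = ((δ ^ β) ^ 2)⁻¹ := by
    rw [Real.rpow_neg hδ.le, ← Real.rpow_mul_natCast hδ.le]
    ring_nf
  have hF : ∫ y, F y ∂μ ≤ (√K * μ.real S / δ ^ β) ^ 2 :=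
    calc ∫ y, F y ∂μ ≤ (∫⁻ y, ENNReal.ofReal (F y) ∂μ).toReal := by
          refine (Real.le_norm_self _).trans ((norm_integral_le_lintegral_norm F).trans_eq ?_)
          simp_rw [Real.norm_of_nonneg (hF_nonneg _)]
      _ ≤ (μ S ^ 2 * ENNReal.ofReal (K * δ ^ (-(2 * β)))).toReal := by
          refine ENNReal.toReal_mono (by finiteness) ?_
          simp_rw [F, Real.rpow_natCast]
          exact lintegral_sq_setIntegral_mul_weight_le μ hβ hβB ht hδ hS hxS
      _ = (√K * μ.real S / δ ^ β) ^ 2 := by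
          rw [ENNReal.toReal_mul, ENNReal.toReal_pow, ← measureReal_def,
            ENNReal.toReal_ofReal (by positivity), hδ_sq, div_pow, mul_pow, Real.sq_sqrt hK.le]
          ring
  rw [← Real.sqrt_eq_rpow]
  exact (Real.sqrt_le_left (by positivity)).mpr hF

end HaarMeasure

lemma setDist'_nonneg {X : Type*} [MetricSpace X] (A B : Set X) : 0 ≤ setDist' A B :=
  Real.sInf_nonneg (by rintro _ ⟨a, -, b, -, rfl⟩; exact dist_nonneg)

lemma setDist'_le_dist {X : Type*} [MetricSpace X] {A B : Set X} {a b : X} (ha : a ∈ A)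
    (hb : b ∈ B) : setDist' A B ≤ dist a b :=
  csInf_le ⟨0, by rintro _ ⟨a, -, b, -, rfl⟩; exact dist_nonneg⟩ (mem_image2_of_mem ha hb)

namespace Cube

variable {n : ℕ}

lemma toSet_eq_pi (I : Cube n) :
    I.toSet = univ.pi fun i => Ico (I.corner i) (I.corner i + I.side) := by
  ext x; simp [toSet, mem_pi]

lemma volume_toSet (I : Cube n) : volume I.toSet = ENNReal.ofReal I.vol := by
  rw [toSet_eq_pi, volume_pi_pi]
  simp [vol, ENNReal.ofReal_pow I.side_pos.le]

lemma half_side_add_cubeDist_le {I₁ I₂ : Cube n} {x z : Fin n → ℝ} {t : ℝ}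
    (hx : x ∈ I₂.toSet) (hz : z ∈ I₁.toSet) (ht : I₂.side / 2 < t) :
    (I₂.side + cubeDist I₁ I₂) / 2 ≤ t + ‖x - z‖ := by
  have hdist : cubeDist I₁ I₂ ≤ ‖x - z‖ := by
    rw [← dist_eq_norm, dist_comm]; exact setDist'_le_dist hz hx
  have hd : 0 ≤ cubeDist I₁ I₂ := setDist'_nonneg _ _
  linarith

end Cube

theorem stmt_1_general (n : ℕ) (lam₁ α : ℝ) (hα : 0 < α)
    (hαn : α ≤ n * (lam₁ - 2) / 2) :
    ∃ C > 0, ∀ (I₁ I₂ : Cube n) (x₁ : Fin n → ℝ) (t₁ : ℝ),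
      x₁ ∈ I₂.toSet → t₁ ∈ Set.Ioo (I₂.side / 2) I₂.side →
      (∫ y₁, (∫ z₁ in I₁.toSet, ((t₁ + ‖x₁ - y₁ - z₁‖) ^ ((n : ℝ) + α))⁻¹) ^ 2
          * (t₁ / (t₁ + ‖y₁‖)) ^ ((n : ℝ) * lam₁) / t₁ ^ (n : ℝ)) ^ ((1 : ℝ) / 2)
        ≤ C * I₁.vol / (I₂.side + cubeDist I₁ I₂) ^ ((n : ℝ) + α) := by
  obtain ⟨C, hC, hbound⟩ := exists_sqrt_integral_sq_setIntegral_mul_weight_le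
    (volume : Measure (Fin n → ℝ)) (β := n + α) (B := n * lam₁)
    (by rw [finrank_fin_fun]; linarith [n.cast_nonneg (α := ℝ)]) (by linarith)
  refine ⟨2 ^ ((n : ℝ) + α) * C, by positivity, fun I₁ I₂ x₁ t₁ hx ht => ?_⟩
  have hD : 0 < I₂.side + cubeDist I₁ I₂ :=
    add_pos_of_pos_of_nonneg I₂.side_pos (setDist'_nonneg _ _)
  have h := hbound t₁ _ x₁ I₁.toSet (by linarith [I₂.side_pos, ht.1]) (half_pos hD)
    (by simp [I₁.volume_toSet]) fun z hz => Cube.half_side_add_cubeDist_le hx hz ht.1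
  have hvol : 0 ≤ I₁.vol := pow_nonneg I₁.side_pos.le n
  rw [finrank_fin_fun, measureReal_def, I₁.volume_toSet, ENNReal.toReal_ofReal hvol,
    Real.div_rpow hD.le zero_le_two] at h
  calc _ ≤ _ := h
    _ = _ := by field_simp

/-- the weighted kernel estimate over the Whitney region. -/
theorem stmt_1 (n : ℕ) (hn : 1 ≤ n) (lam₁ α : ℝ) (hlam : 2 < lam₁) (hα : 0 < α)
    (hαn : α ≤ n * (lam₁ - 2) / 2) :
    ∃ C > 0, ∀ (I₁ I₂ : Cube n) (x₁ : Fin n → ℝ) (t₁ : ℝ),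
      x₁ ∈ I₂.toSet → t₁ ∈ Set.Ioo (I₂.side / 2) I₂.side →
      (∫ y₁, (∫ z₁ in I₁.toSet, ((t₁ + ‖x₁ - y₁ - z₁‖) ^ ((n : ℝ) + α))⁻¹) ^ 2
          * (t₁ / (t₁ + ‖y₁‖)) ^ ((n : ℝ) * lam₁) / t₁ ^ (n : ℝ)) ^ ((1 : ℝ) / 2)
        ≤ C * I₁.vol / (I₂.side + cubeDist I₁ I₂) ^ ((n : ℝ) + α) :=
  stmt_1_general n lam₁ α hα hαn
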